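/- arXiv:0705.2955 — 7 statements merged into one kernel-verified Lean document; each statement's English description precedes it below -/
import Mathlib

section
/- For all rational numbers a, b, c, d with ac ≠ 0 and all rational u with u ≠ 0, setting T = -(-b^2 + 4ad + 4a^3u^4)/(4ac), x = au^2, and y = (-(b^4 + 8abc^2 - 8ab^2d + 16a^2d^2)u + 8a^3(b^2-4ad)u^5 - 16a^6u^9)/(16ac^2), we have y^2 = x^3 + (aT^4 + bT^2 + cT + d)·x. -/
theorem stmt_0 (a b c d u : ℚ) (hac : a * c ≠ 0) (hu : u ≠ 0)
    (T x y : ℚ)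
    (hT : T = -(-b^2 + 4*a*d + 4*a^3*u^4) / (4*a*c))
    (hx : x = a * u^2)
    (hy : y = (-(b^4 + 8*a*b*c^2 - 8*a*b^2*d + 16*a^2*d^2) * u
        + 8*a^3*(b^2 - 4*a*d)*u^5 - 16*a^6*u^9) / (16*a*c^2)) :
    y^2 = x^3 + (a*T^4 + b*T^2 + c*T + d) * x := by
  have ha : a ≠ 0 := fun h => hac (by simp [h])
  have hc : c ≠ 0 := fun h => hac (by simp [h])
  subst hT hx hy
  field_simp
  ring
end

section
/- For any rational numbers a, b, c, d, u, T, p, q, r, s with r ≠ 0, if p = a/r^2 and q = (a^2 + br^4 - 2ar^3s)/r^6, then the polynomial (pT+q)(rT+s)^2 - (pT+q)^2 - (aT^3 + bT^2 + cT + d), viewed as a polynomial in T, has degree at most 1. -/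
open Polynomial

theorem stmt_2 (a b c d p q r s : ℚ) (hr : r ≠ 0)
    (hp : p = a / r^2) (hq : q = (a^2 + b*r^4 - 2*a*r^3*s) / r^6) :
    ((C p * X + C q) * (C r * X + C s)^2 - (C p * X + C q)^2
      - (C a * X^3 + C b * X^2 + C c * X + C d) : ℚ[X]).degree ≤ 1 := by
  have ha : a = p * r^2 := by rw [hp]; field_simp
  have hb : b = q*r^2 + 2*p*r*s - p^2 := by
    subst ha; rw [hq]; field_simp; ring
  subst ha hb
  have h : ((C p * X + C q) * (C r * X + C s)^2 - (C p * X + C q)^2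
      - (C (p*r^2) * X^3 + C (q*r^2 + 2*p*r*s - p^2) * X^2 + C c * X + C d) : ℚ[X])
      = C (p*s^2 + 2*q*r*s - 2*p*q - c) * X + C (q*s^2 - q^2 - d) := by
    simp only [map_mul, map_add, map_sub, map_pow, map_ofNat]
    ring
  rw [h]
  calc (C (p*s^2 + 2*q*r*s - 2*p*q - c) * X + C (q*s^2 - q^2 - d)).degree
      ≤ max (C (p*s^2 + 2*q*r*s - 2*p*q - c) * X).degree (C (q*s^2 - q^2 - d)).degree :=
        degree_add_le _ _
    _ ≤ 1 := by
        apply max_le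
        · refine (degree_mul_le _ _).trans ?_
          calc (C (p*s^2 + 2*q*r*s - 2*p*q - c)).degree + X.degree
              ≤ 0 + 1 := add_le_add degree_C_le degree_X_le
            _ = 1 := by simp
        · exact (degree_C_le).trans (by norm_num)
end

section
/- Let g(t) = t^6 + at^4 + bt^3 + ct^2 + dt + e with a,b,c,d,e ∈ ℚ, and let u ∈ ℚ with u ≠ 0. Set p = b/(2u) and q = (-3b^2 - 4a^2u^2 + 12cu^2 + 8au^4 - 4u^6)/(24u^3). Then the polynomial in T given by (uT^2 + pT + q)^2 - [u^2T^4 + bT^3 - ((a^2 - 3c - 2au^2 + u^4)/3)T^2 + dT + (-a^3 + 27e + 3a^2u^2 - 3au^4 + u^6)/27] has degree at most 1 in T. -/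
open Polynomial

theorem stmt_4 (a b c d e u p q : ℚ) (hu : u ≠ 0)
    (hp : p = b / (2*u))
    (hq : q = (-3*b^2 - 4*a^2*u^2 + 12*c*u^2 + 8*a*u^4 - 4*u^6) / (24*u^3)) :
    ((C u * X^2 + C p * X + C q)^2
      - (C (u^2) * X^4 + C b * X^3 - C ((a^2 - 3*c - 2*a*u^2 + u^4)/3) * X^2
          + C d * X + C ((-a^3 + 27*e + 3*a^2*u^2 - 3*a*u^4 + u^6)/27)) : ℚ[X]).degree
      ≤ 1 := by
  have hb : b = 2*u*p := by rw [hp]; field_simp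
  have hk : (a^2 - 3*c - 2*a*u^2 + u^4)/3 = -(p^2 + 2*u*q) := by
    rw [hp, hq]; field_simp; ring
  have key : ((C u * X^2 + C p * X + C q)^2
      - (C (u^2) * X^4 + C b * X^3 - C ((a^2 - 3*c - 2*a*u^2 + u^4)/3) * X^2
          + C d * X + C ((-a^3 + 27*e + 3*a^2*u^2 - 3*a*u^4 + u^6)/27)) : ℚ[X])
      = C (2*p*q - d) * X
        + C (q^2 - ((-a^3 + 27*e + 3*a^2*u^2 - 3*a*u^4 + u^6)/27)) := by
    rw [hb, hk]
    simp only [C_mul, C_add, C_sub, C_neg, C_pow, map_ofNat]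
    ring
  rw [key]
  compute_degree
end

section
/- Let e ∈ ℚ and g(t) = t^6 + e. For every rational s ≠ 0, the point (x, y) with x = (419904e^2 - 648e·s^6 + s^12)/(18s^10) and y = -(272097792e^3 - 419904e^2·s^6 + 1944e·s^12 + s^18)/(72s^15) satisfies y^2 = x^3 + g(χ1(s)), where χ1(s) = -(648e + s^6)/(6s^5). -/
theorem stmt_9 (e s : ℚ) (hs : s ≠ 0)
    (x y χ1 : ℚ)
    (hx : x = (419904*e^2 - 648*e*s^6 + s^12) / (18*s^10))
    (hy : y = -(272097792*e^3 - 419904*e^2*s^6 + 1944*e*s^12 + s^18) / (72*s^15))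
    (hχ : χ1 = -(648*e + s^6) / (6*s^5)) :
    y^2 = x^3 + (χ1^6 + e) := by
  subst hx hy hχ
  field_simp
  ring
end

section
/- Let a, b, c, d, e ∈ ℚ and g(z) = z^6 + az^4 + bz^3 + cz^2 + dz + e. For rational s, u, set p = 2s, q = (a + 2s^2 + 12u)/6, r = (3b - 2as - s^3 + 12su)/18. Then (3T^3 + pT^2 + qT + r)^2 - (2T^2 + sT + u)^3 - g(T), as a polynomial in T, has degree at most 2, and its coefficient of T^2 equals -c + q^2 + 2pr - 3s^2u - 6u^2. -/
/-!
The choice of `p`, `q`, `r` is exactly what makes the coefficients of `T^5`, `T^4` and `T^3`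
in `(3T^3 + pT^2 + qT + r)^2 - (2T^2 + sT + u)^3 - g(T)` vanish (the `T^6` terms cancel
because `9 - 8 = 1`), so the difference is an explicit quadratic. Over an infinite field, the
polynomial identity can be checked after evaluation at every point, where it is a rational
function identity in the coefficients.
-/

open Polynomial

theorem cubic_sq_sub_quadratic_cube_sub_sextic_eq_quadratic {K : Type*} [Field K] [CharZero K]
    (a b c d e s u p q r : K)
    (hp : p = 2*s) (hq : q = (a + 2*s^2 + 12*u)/6)
    (hr : r = (3*b - 2*a*s - s^3 + 12*s*u)/18) :
    ((C 3 * X^3 + C p * X^2 + C q * X + C r)^2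
      - (C 2 * X^2 + C s * X + C u)^3
      - (X^6 + C a * X^4 + C b * X^3 + C c * X^2 + C d * X + C e) : K[X])
      = C (-c + q^2 + 2*p*r - 3*s^2*u - 6*u^2) * X^2
        + C (2*q*r - d - 3*s*u^2) * X + C (r^2 - e - u^3) := by
  refine Polynomial.funext fun t => ?_
  simp only [eval_add, eval_sub, eval_mul, eval_pow, eval_C, eval_X]
  subst hp hq hr
  ring

theorem stmt_14 (a b c d e s u p q r : ℚ)
    (hp : p = 2*s) (hq : q = (a + 2*s^2 + 12*u)/6)
    (hr : r = (3*b - 2*a*s - s^3 + 12*s*u)/18) :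
    ((C 3 * X^3 + C p * X^2 + C q * X + C r)^2
      - (C 2 * X^2 + C s * X + C u)^3
      - (X^6 + C a * X^4 + C b * X^3 + C c * X^2 + C d * X + C e) : ℚ[X]).degree ≤ 2
    ∧ ((C 3 * X^3 + C p * X^2 + C q * X + C r)^2
      - (C 2 * X^2 + C s * X + C u)^3
      - (X^6 + C a * X^4 + C b * X^3 + C c * X^2 + C d * X + C e) : ℚ[X]).coeff 2
      = -c + q^2 + 2*p*r - 3*s^2*u - 6*u^2 := by
  rw [cubic_sq_sub_quadratic_cube_sub_sextic_eq_quadratic a b c d e s u p q r hp hq hr]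
  exact ⟨degree_quadratic_le, by simp only [coeff_add, coeff_C_mul_X_pow, coeff_C_mul_X, coeff_C]; norm_num⟩
end

section
/- Let p, b ∈ ℚ with b ≠ 0 and 3b - 16p^3 ≠ 0, and set a = 6p^2, c = p(4b - 15p^3). Then the point P = (8a, 48b) = (48p^2, 48b) is a point of order exactly 3 on the elliptic curve Y^2 = X^3 - 72(a^2 - 4c)X + 64(a^3 + 36b^2 - 36ac). -/
open WeierstrassCurve.Affine

/- Since `P ≠ 0`, it has order 3 exactly when `2P = -P`. The tangent line at `P` meets the curve
again at `-2P`, and when that third intersection has the abscissa of `P` it is `P` itself, as the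
tangent passes through `P`. -/
theorem WeierstrassCurve.Affine.addOrderOf_some_eq_three_of_addX_eq {F : Type*} [Field F]
    [DecidableEq F] {W : WeierstrassCurve.Affine F} {x y : F} (h : W.Nonsingular x y)
    (hy : y ≠ W.negY x y) (hx : W.addX x x (W.slope x x y y) = x) :
    addOrderOf (Point.some x y h) = 3 := by
  have : Fact (Nat.Prime 3) := ⟨Nat.prime_three⟩
  have hY : W.addY x x y (W.slope x x y y) = W.negY x y := by
    rw [addY, negAddY, hx, sub_self, mul_zero, zero_add]
  apply addOrderOf_eq_prime _ (Point.some_ne_zero h)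
  rw [show (3 : ℕ) = 2 + 1 from rfl, succ_nsmul, two_nsmul, Point.add_self_of_Y_ne hy]
  exact Point.add_of_Y_eq hx hY

theorem stmt_16_general (p b : ℚ) (hb : b ≠ 0)
    (a c : ℚ) (hac : a = 6*p^2 ∧ c = p*(4*b - 15*p^3)) :
    let W : WeierstrassCurve.Affine ℚ :=
      { a₁ := 0, a₂ := 0, a₃ := 0,
        a₄ := -72 * (a^2 - 4*c),
        a₆ := 64 * (a^3 + 36*b^2 - 36*a*c) }
    ∃ hP : W.Nonsingular (48*p^2) (48*b),
      addOrderOf (WeierstrassCurve.Affine.Point.some (48*p^2) (48*b) hP : W.Point) = 3 := by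
  obtain ⟨rfl, rfl⟩ := hac
  intro W
  have h2y : (2 * (48 * b) : ℚ) ≠ 0 := by positivity
  have hy : 48*b ≠ W.negY (48*p^2) (48*b) := by
    simp only [W, negY]
    intro h
    exact h2y (by linarith)
  have hP : W.Nonsingular (48*p^2) (48*b) := by
    refine (nonsingular_iff _ _).2 ⟨(equation_iff _ _).2 ?_, Or.inr hy⟩
    simp only [W]
    ring
  have hslope : W.slope (48*p^2) (48*p^2) (48*b) (48*b) = 12*p := by
    rw [slope_of_Y_ne rfl hy]
    simp only [W, negY]
    field_simp
    ring
  refine ⟨hP, addOrderOf_some_eq_three_of_addX_eq hP hy ?_⟩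
  rw [addX, hslope]
  simp only [W]
  ring

theorem stmt_16 (p b : ℚ) (hb : b ≠ 0) (hp : 3*b - 16*p^3 ≠ 0)
    (a c : ℚ) (hac : a = 6*p^2 ∧ c = p*(4*b - 15*p^3)) :
    let W : WeierstrassCurve.Affine ℚ :=
      { a₁ := 0, a₂ := 0, a₃ := 0,
        a₄ := -72 * (a^2 - 4*c),
        a₆ := 64 * (a^3 + 36*b^2 - 36*a*c) }
    ∃ hP : W.Nonsingular (48*p^2) (48*b),
      addOrderOf (WeierstrassCurve.Affine.Point.some (48*p^2) (48*b) hP : W.Point) = 3 :=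
  stmt_16_general p b hb a c hac
end

section
/- Let a, b, c, d, e, f, g, h ∈ ℚ with a ≠ 0, and let r, s ∈ ℚ with r ≠ 0. Set p = (-d + r^2)/a, q = -(-d^3 + a^3e + 3d^2r^2 - 3dr^4 + r^6 - 2a^3rs)/a^4, u = -(-f - bp - 3p^2q + s^2)/(2r). Then the polynomial (rT^2 + sT + u)^2 - ((pT + q)^3 + (aT^3 + bT + c)(pT + q) + (dT^4 + eT^3 + fT^2 + gT + h)) in T has degree at most 1. -/
open Polynomial

/-! Substituting `x = pT + q`, `y = rT² + sT + u` into `y² - (x³ + f₄(T) x + g₄(T))`, the coefficients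
of `T⁴`, `T³`, `T²` are `r² - ap - d`, `2rs - p³ - aq - e` and `s² + 2ru - 3p²q - bp - f`. They can be
killed one after the other, solving the first for `p`, the second for `q` and the third for `u`. -/

section CommRing

variable {R : Type*} [CommRing R]

theorem sq_sub_weierstrass_subst_eq_linear (a b c d e f g h p q r s u : R)
    (h4 : r ^ 2 = a * p + d) (h3 : 2 * r * s = p ^ 3 + a * q + e)
    (h2 : s ^ 2 + 2 * r * u = 3 * p ^ 2 * q + b * p + f) :
    ((C r * X ^ 2 + C s * X + C u) ^ 2
      - ((C p * X + C q) ^ 3 + (C a * X ^ 3 + C b * X + C c) * (C p * X + C q)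
          + (C d * X ^ 4 + C e * X ^ 3 + C f * X ^ 2 + C g * X + C h)) : R[X])
      = C (2 * s * u - 3 * p * q ^ 2 - b * q - c * p - g) * X + C (u ^ 2 - q ^ 3 - c * q - h) := by
  have C4 := congrArg C h4
  have C3 := congrArg C h3
  have C2 := congrArg C h2
  simp only [map_add, map_sub, map_mul, map_pow, map_ofNat] at C4 C3 C2 ⊢
  linear_combination X ^ 4 * C4 + X ^ 3 * C3 + X ^ 2 * C2

theorem degree_sq_sub_weierstrass_subst_le_one (a b c d e f g h p q r s u : R)
    (h4 : r ^ 2 = a * p + d) (h3 : 2 * r * s = p ^ 3 + a * q + e)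
    (h2 : s ^ 2 + 2 * r * u = 3 * p ^ 2 * q + b * p + f) :
    ((C r * X ^ 2 + C s * X + C u) ^ 2
      - ((C p * X + C q) ^ 3 + (C a * X ^ 3 + C b * X + C c) * (C p * X + C q)
          + (C d * X ^ 4 + C e * X ^ 3 + C f * X ^ 2 + C g * X + C h)) : R[X]).degree ≤ 1 := by
  rw [sq_sub_weierstrass_subst_eq_linear a b c d e f g h p q r s u h4 h3 h2]
  exact degree_linear_le

end CommRing

theorem stmt_17 (a b c d e f g h r s : ℚ) (ha : a ≠ 0) (hr : r ≠ 0)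
    (p q u : ℚ)
    (hp : p = (-d + r^2)/a)
    (hq : q = -(-d^3 + a^3*e + 3*d^2*r^2 - 3*d*r^4 + r^6 - 2*a^3*r*s)/a^4)
    (hu : u = -(-f - b*p - 3*p^2*q + s^2)/(2*r)) :
    ((C r * X^2 + C s * X + C u)^2
      - ((C p * X + C q)^3 + (C a * X^3 + C b * X + C c) * (C p * X + C q)
          + (C d * X^4 + C e * X^3 + C f * X^2 + C g * X + C h)) : ℚ[X]).degree ≤ 1 := by
  apply degree_sq_sub_weierstrass_subst_le_one
  · rw [hp]; field_simp; ring
  · rw [hp, hq]; field_simp; ring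
  · rw [hu]; field_simp; ring
end
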